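/- (Alice-side entropy bound from Example 2.) Let M₁ be a finite-valued random variable that is conditionally independent of Yⁿ given Xⁿ. Then H(Xⁿ | M₁) ≤ 2·H(Y_Xⁿ | M₁, Yⁿ). (The proof uses that, given Yⁿ, the pair (Y_Xⁿ, Ỹ_Xⁿ) determines Xⁿ, where Ỹ = (1−Y₀, Y₁), and that (Xⁿ, Ỹⁿ) has the same distribution as (Xⁿ, Yⁿ).) -/

import Mathlib

/-
`Yⁿ` is uniform and independent of `Xⁿ`, and `I(M₁; Yⁿ | Xⁿ) = 0`; by the equality case of
Gibbs' inequality the joint law factors as `p(m, y, x) = p(m, x) p(y, x) / p(x)`, so `Yⁿ` is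
independent of `(M₁, Xⁿ)`. This gives `H(Xⁿ | M₁) ≤ H(Xⁿ | M₁, Yⁿ)`, and it shows that
`(M₁, Ỹⁿ, Xⁿ)` has the same law as `(M₁, Yⁿ, Xⁿ)`, where `Ỹ = (1 − Y₀, Y₁)`. Coordinatewise
`Y_{Xᵢ,i} = Ỹ_{Xᵢ,i}` exactly when `Xᵢ = 1`, so `Xⁿ` is a function of `(Y_Xⁿ, Ỹ_Xⁿ)`, and
subadditivity of conditional entropy gives
`H(Xⁿ | M₁, Yⁿ) ≤ H(Y_Xⁿ | M₁, Yⁿ) + H(Ỹ_Xⁿ | M₁, Yⁿ) = 2 H(Y_Xⁿ | M₁, Yⁿ)`.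
-/

open scoped BigOperators

/-- A probability mass function on a finite type, given as a real-valued function. -/
def IsPMF {Ω : Type*} [Fintype Ω] (p : Ω → ℝ) : Prop :=
  (∀ ω, 0 ≤ p ω) ∧ ∑ ω, p ω = 1

open Classical in
/-- Probability of an event under a pmf on a finite type. -/
noncomputable def probOf {Ω : Type*} [Fintype Ω] (p : Ω → ℝ) (E : Ω → Prop) : ℝ :=
  ∑ ω, if E ω then p ω else 0

/-- Distribution (pushforward) of a random variable `A` under pmf `p`. -/
noncomputable def distOf {Ω β : Type*} [Fintype Ω] [DecidableEq β]
    (p : Ω → ℝ) (A : Ω → β) : β → ℝ :=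
  fun b => ∑ ω, if A ω = b then p ω else 0

/-- Shannon entropy (in nats) of a distribution on a finite type. -/
noncomputable def entD {β : Type*} [Fintype β] (q : β → ℝ) : ℝ :=
  -∑ b, q b * Real.log (q b)

/-- Shannon entropy H(A) of a random variable `A` under pmf `p`. -/
noncomputable def entRV {Ω β : Type*} [Fintype Ω] [Fintype β] [DecidableEq β]
    (p : Ω → ℝ) (A : Ω → β) : ℝ :=
  entD (distOf p A)

/-- Conditional Shannon entropy H(A | C). -/
noncomputable def condEnt {Ω β γ : Type*} [Fintype Ω] [Fintype β] [DecidableEq β]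
    [Fintype γ] [DecidableEq γ] (p : Ω → ℝ) (A : Ω → β) (C : Ω → γ) : ℝ :=
  entRV p (fun ω => (A ω, C ω)) - entRV p C

/-- Mutual information I(A; B). -/
noncomputable def mutInfo {Ω β γ : Type*} [Fintype Ω] [Fintype β] [DecidableEq β]
    [Fintype γ] [DecidableEq γ] (p : Ω → ℝ) (A : Ω → β) (B : Ω → γ) : ℝ :=
  entRV p A + entRV p B - entRV p (fun ω => (A ω, B ω))

/-- Conditional mutual information I(A; B | C). -/
noncomputable def condMutInfo {Ω β γ δ : Type*} [Fintype Ω] [Fintype β] [DecidableEq β]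
    [Fintype γ] [DecidableEq γ] [Fintype δ] [DecidableEq δ]
    (p : Ω → ℝ) (A : Ω → β) (B : Ω → γ) (C : Ω → δ) : ℝ :=
  entRV p (fun ω => (A ω, C ω)) + entRV p (fun ω => (B ω, C ω))
    - entRV p (fun ω => (A ω, B ω, C ω)) - entRV p C

/-- Privacy against Alice with respect to `g` of a transition kernel `k(m|x,y)`,
for the function `f` being computed. -/
def PrivAlice {𝒳 𝒴 𝒵 𝒢 ℳ : Type*} (f : 𝒳 → 𝒴 → 𝒵) (g : 𝒳 → 𝒴 → 𝒢)
    (k : 𝒳 → 𝒴 → ℳ → ℝ) : Prop :=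
  ∀ x y₁ y₂, g x y₁ ≠ g x y₂ → f x y₁ = f x y₂ → ∀ m, k x y₁ m = k x y₂ m

/-- Privacy against Bob with respect to `h` of a transition kernel `k(m|x,y)`,
for the function `f` being computed. -/
def PrivBob {𝒳 𝒴 𝒵 ℋ ℳ : Type*} (f : 𝒳 → 𝒴 → 𝒵) (h : 𝒳 → 𝒴 → ℋ)
    (k : 𝒳 → 𝒴 → ℳ → ℝ) : Prop :=
  ∀ x₁ x₂ y, h x₁ y ≠ h x₂ y → f x₁ y = f x₂ y → ∀ m, k x₁ y m = k x₂ y m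

/-- `Y_Xⁿ`: the vector whose `i`-th entry is `Y₀ᵢ` if `Xᵢ = 0` and `Y₁ᵢ` if `Xᵢ = 1`. -/
def selSame {Ω : Type*} {n : ℕ} (Xv : Ω → Fin n → Bool)
    (Yv : Ω → Fin n → Bool × Bool) : Ω → Fin n → Bool :=
  fun ω i => if Xv ω i then (Yv ω i).2 else (Yv ω i).1

/-- `Y_{X̄}ⁿ`: the vector whose `i`-th entry is `Y_{1−Xᵢ, i}`. -/
def selOpp {Ω : Type*} {n : ℕ} (Xv : Ω → Fin n → Bool)
    (Yv : Ω → Fin n → Bool × Bool) : Ω → Fin n → Bool :=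
  fun ω i => if Xv ω i then (Yv ω i).1 else (Yv ω i).2

/-- The inputs `(Xⁿ, Yⁿ) = (Xⁿ, (Y₀ⁿ, Y₁ⁿ))` are `n` i.i.d. copies of three mutually
independent uniform bits, i.e. the joint distribution is uniform on the `8^n` values. -/
def UnifIID {Ω : Type*} [Fintype Ω] {n : ℕ} (p : Ω → ℝ)
    (Xv : Ω → Fin n → Bool) (Yv : Ω → Fin n → Bool × Bool) : Prop :=
  ∀ (xv : Fin n → Bool) (yv : Fin n → Bool × Bool),
    probOf p (fun ω => Xv ω = xv ∧ Yv ω = yv) = (1 / 8 : ℝ) ^ n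

open Real Finset InformationTheory

section Pushforward

variable {Ω β γ : Type*} [Fintype Ω] [DecidableEq β] [DecidableEq γ] {p : Ω → ℝ}

lemma distOf_nonneg (hp : ∀ ω, 0 ≤ p ω) (A : Ω → β) (b : β) : 0 ≤ distOf p A b :=
  sum_nonneg fun ω _ => by split_ifs <;> simp [hp ω]

lemma sum_distOf_mul [Fintype β] (p : Ω → ℝ) (A : Ω → β) (φ : β → ℝ) :
    ∑ b, distOf p A b * φ b = ∑ ω, p ω * φ (A ω) := by
  simp only [distOf, sum_mul, ite_mul, zero_mul]
  rw [sum_comm]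
  simp

lemma sum_distOf [Fintype β] (p : Ω → ℝ) (A : Ω → β) : ∑ b, distOf p A b = ∑ ω, p ω := by
  simpa using sum_distOf_mul p A fun _ => 1

lemma sum_distOf_pair_left [Fintype β] (p : Ω → ℝ) (A : Ω → β) (B : Ω → γ) (b : γ) :
    ∑ a, distOf p (fun ω => (A ω, B ω)) (a, b) = distOf p B b := by
  simp only [distOf, Prod.mk.injEq]
  rw [sum_comm]
  refine sum_congr rfl fun ω _ => ?_
  by_cases h : B ω = b <;> simp [h]

lemma sum_distOf_pair_right [Fintype γ] (p : Ω → ℝ) (A : Ω → β) (B : Ω → γ) (a : β) :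
    ∑ b, distOf p (fun ω => (A ω, B ω)) (a, b) = distOf p A a := by
  simp only [distOf, Prod.mk.injEq]
  rw [sum_comm]
  refine sum_congr rfl fun ω _ => ?_
  by_cases h : A ω = a <;> simp [h]

lemma distOf_comp [Fintype β] (p : Ω → ℝ) (A : Ω → β) (G : β → γ) :
    distOf p (fun ω => G (A ω)) = distOf (distOf p A) G := by
  funext c
  simpa [distOf] using (sum_distOf_mul p A fun b => if G b = c then 1 else 0).symm

lemma distOf_le_distOf_comp (hp : ∀ ω, 0 ≤ p ω) (A : Ω → β) (G : β → γ) (b : β) :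
    distOf p A b ≤ distOf p (fun ω => G (A ω)) (G b) :=
  sum_le_sum fun ω _ => by
    by_cases h : A ω = b
    · simp [h]
    · rw [if_neg h]; split_ifs <;> simp [hp ω]

lemma le_distOf (hp : ∀ ω, 0 ≤ p ω) (A : Ω → β) (ω : Ω) : p ω ≤ distOf p A (A ω) :=
  single_le_sum (f := fun ω' => if A ω' = A ω then p ω' else 0)
    (fun ω' _ => by split_ifs <;> simp [hp ω']) (mem_univ ω) |>.trans_eq' (by simp)

lemma distOf_comp_of_injective (p : Ω → ℝ) (A : Ω → β) {G : β → γ} (hG : G.Injective)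
    (b : β) : distOf p (fun ω => G (A ω)) (G b) = distOf p A b := by
  simp [distOf, hG.eq_iff]

lemma distOf_comp_of_involutive (p : Ω → ℝ) (A : Ω → β) {e : β → β} (he : e.Involutive)
    (b : β) : distOf p (fun ω => e (A ω)) b = distOf p A (e b) := by
  simp [distOf, he.eq_iff]

lemma entRV_eq_neg_sum [Fintype β] (p : Ω → ℝ) (A : Ω → β) :
    entRV p A = -∑ ω, p ω * log (distOf p A (A ω)) := by
  rw [entRV, entD, sum_distOf_mul p A fun b => log (distOf p A b)]

lemma entRV_comp_le [Fintype β] [Fintype γ] (hp : ∀ ω, 0 ≤ p ω) (A : Ω → β) (G : β → γ) :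
    entRV p (fun ω => G (A ω)) ≤ entRV p A := by
  rw [entRV_eq_neg_sum, entRV_eq_neg_sum, neg_le_neg_iff]
  refine sum_le_sum fun ω _ => ?_
  rcases (hp ω).eq_or_lt with h | h
  · simp [← h]
  · exact mul_le_mul_of_nonneg_left
      (log_le_log (h.trans_le (le_distOf hp A ω)) (distOf_le_distOf_comp hp A G _)) h.le

lemma entRV_comp_of_injective [Fintype β] [Fintype γ] (p : Ω → ℝ) (A : Ω → β) {G : β → γ}
    (hG : G.Injective) : entRV p (fun ω => G (A ω)) = entRV p A := by
  simp only [entRV_eq_neg_sum, distOf_comp_of_injective p A hG]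

lemma entRV_comp_congr [Fintype β] [Fintype γ] {A A' : Ω → β} (h : distOf p A = distOf p A')
    (G : β → γ) : entRV p (fun ω => G (A ω)) = entRV p (fun ω => G (A' ω)) := by
  rw [entRV, entRV, distOf_comp p A G, distOf_comp p A' G, h]

lemma entRV_of_distOf_eq_const [Fintype β] {A : Ω → β} {c : ℝ} (h : ∀ b, distOf p A b = c)
    (hc : Fintype.card β * c = 1) : entRV p A = -log c := by
  simp only [entRV, entD, h, sum_const, card_univ, nsmul_eq_mul]
  rw [← mul_assoc, hc, one_mul]

end Pushforward

section Gibbs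

variable {α : Type*} [Fintype α] {q r : α → ℝ}

lemma mul_log_sub_mul_log_sub_add_eq_mul_klFun {u v : ℝ} (hu : 0 ≤ u) (hv : 0 ≤ v)
    (huv : v = 0 → u = 0) : u * log u - u * log v - u + v = v * klFun (u / v) := by
  rcases hv.eq_or_lt with rfl | hv
  · simp [huv rfl]
  rcases hu.eq_or_lt with rfl | hu
  · simp [klFun]
  rw [klFun, log_div hu.ne' hv.ne']
  field_simp
  ring

lemma sum_mul_log_sub_sum_mul_log (hq : ∀ x, 0 ≤ q x) (hr : ∀ x, 0 ≤ r x)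
    (hqr : ∀ x, r x = 0 → q x = 0) :
    ∑ x, q x * log (q x) - ∑ x, q x * log (r x)
      = ∑ x, r x * klFun (q x / r x) + (∑ x, q x - ∑ x, r x) := by
  simp only [← mul_log_sub_mul_log_sub_add_eq_mul_klFun (hq _) (hr _) (hqr _),
    sum_add_distrib, sum_sub_distrib]
  ring

lemma mul_klFun_div_nonneg {u v : ℝ} (hu : 0 ≤ u) (hv : 0 ≤ v) : 0 ≤ v * klFun (u / v) :=
  mul_nonneg hv (klFun_nonneg (div_nonneg hu hv))

theorem sum_mul_log_le_sum_mul_log (hq : ∀ x, 0 ≤ q x) (hr : ∀ x, 0 ≤ r x)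
    (hqr : ∀ x, r x = 0 → q x = 0) (hsum : ∑ x, r x ≤ ∑ x, q x) :
    ∑ x, q x * log (r x) ≤ ∑ x, q x * log (q x) := by
  have := sum_mul_log_sub_sum_mul_log hq hr hqr
  linarith [sum_nonneg fun x (_ : x ∈ univ) => mul_klFun_div_nonneg (hq x) (hr x)]

theorem eq_of_sum_mul_log_eq (hq : ∀ x, 0 ≤ q x) (hr : ∀ x, 0 ≤ r x)
    (hqr : ∀ x, r x = 0 → q x = 0) (hsum : ∑ x, r x = ∑ x, q x)
    (h : ∑ x, q x * log (r x) = ∑ x, q x * log (q x)) : q = r := by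
  have hzero : ∑ x, r x * klFun (q x / r x) = 0 := by
    linarith [sum_mul_log_sub_sum_mul_log hq hr hqr]
  funext x
  have hx := (sum_eq_zero_iff_of_nonneg fun x _ => mul_klFun_div_nonneg (hq x) (hr x)).mp
    hzero x (mem_univ x)
  rcases mul_eq_zero.mp hx with h0 | h1
  · rw [h0, hqr x h0]
  · have := (klFun_eq_zero_iff (div_nonneg (hq x) (hr x))).mp h1
    have hr0 : r x ≠ 0 := by rintro h0; simp [h0] at this
    field_simp at this
    exact this

end Gibbs

section ConditionalMutualInformation

variable {Ω β γ δ : Type*} [Fintype Ω] [DecidableEq β] [DecidableEq γ] [DecidableEq δ]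
  {p : Ω → ℝ}

noncomputable def condIndepDist (p : Ω → ℝ) (A : Ω → β) (B : Ω → γ) (C : Ω → δ) :
    β × γ × δ → ℝ :=
  fun t => distOf p (fun ω => (A ω, C ω)) (t.1, t.2.2) *
    distOf p (fun ω => (B ω, C ω)) (t.2.1, t.2.2) / distOf p C t.2.2

lemma condIndepDist_nonneg (hp : ∀ ω, 0 ≤ p ω) (A : Ω → β) (B : Ω → γ) (C : Ω → δ)
    (t : β × γ × δ) : 0 ≤ condIndepDist p A B C t :=
  div_nonneg (mul_nonneg (distOf_nonneg hp _ _) (distOf_nonneg hp _ _)) (distOf_nonneg hp _ _)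

lemma distOf_eq_zero_of_condIndepDist_eq_zero (hp : ∀ ω, 0 ≤ p ω) (A : Ω → β) (B : Ω → γ)
    (C : Ω → δ) {t : β × γ × δ} (ht : condIndepDist p A B C t = 0) :
    distOf p (fun ω => (A ω, B ω, C ω)) t = 0 := by
  have hAC : distOf p (fun ω => (A ω, B ω, C ω)) t ≤
      distOf p (fun ω => (A ω, C ω)) (t.1, t.2.2) :=
    distOf_le_distOf_comp hp _ (fun t => (t.1, t.2.2)) t
  have hBC : distOf p (fun ω => (A ω, B ω, C ω)) t ≤ distOf p (fun ω => (B ω, C ω)) t.2 :=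
    distOf_le_distOf_comp hp _ Prod.snd t
  have hC : distOf p (fun ω => (A ω, B ω, C ω)) t ≤ distOf p C t.2.2 :=
    distOf_le_distOf_comp hp _ (fun t => t.2.2) t
  refine le_antisymm ?_ (distOf_nonneg hp _ t)
  rcases div_eq_zero_iff.mp ht with h | h
  · rcases mul_eq_zero.mp h with h | h
    · exact hAC.trans_eq h
    · exact hBC.trans_eq h
  · exact hC.trans_eq h

variable [Fintype β] [Fintype γ] [Fintype δ]

lemma sum_condIndepDist (p : Ω → ℝ) (A : Ω → β) (B : Ω → γ) (C : Ω → δ) :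
    ∑ t, condIndepDist p A B C t = ∑ ω, p ω := by
  have hc : ∀ c, ∑ a, ∑ b, condIndepDist p A B C (a, b, c) = distOf p C c := by
    intro c
    simp only [condIndepDist, ← sum_div, ← mul_sum, ← sum_mul, sum_distOf_pair_left]
    exact mul_self_div_self _
  rw [← sum_distOf p C, ← sum_congr rfl fun c _ => hc c, sum_comm, Fintype.sum_prod_type]
  refine sum_congr rfl fun a _ => ?_
  rw [Fintype.sum_prod_type, sum_comm]

lemma condMutInfo_eq_sum_mul_log_sub (hp : ∀ ω, 0 ≤ p ω) (A : Ω → β) (B : Ω → γ)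
    (C : Ω → δ) :
    condMutInfo p A B C =
      ∑ t, distOf p (fun ω => (A ω, B ω, C ω)) t *
          log (distOf p (fun ω => (A ω, B ω, C ω)) t)
        - ∑ t, distOf p (fun ω => (A ω, B ω, C ω)) t * log (condIndepDist p A B C t) := by
  have hq := sum_distOf_mul p (fun ω => (A ω, B ω, C ω))
    fun t => log (distOf p (fun ω => (A ω, B ω, C ω)) t)
  have hr := sum_distOf_mul p (fun ω => (A ω, B ω, C ω))
    fun t => log (condIndepDist p A B C t)
  have hpt : ∀ ω, p ω * log (condIndepDist p A B C (A ω, B ω, C ω)) =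
      p ω * log (distOf p (fun ω => (A ω, C ω)) (A ω, C ω))
        + p ω * log (distOf p (fun ω => (B ω, C ω)) (B ω, C ω))
        - p ω * log (distOf p C (C ω)) := by
    intro ω
    rcases (hp ω).eq_or_lt with h | h
    · simp [← h]
    have hAC := h.trans_le (le_distOf hp (fun ω => (A ω, C ω)) ω)
    have hBC := h.trans_le (le_distOf hp (fun ω => (B ω, C ω)) ω)
    have hC := h.trans_le (le_distOf hp C ω)
    rw [condIndepDist, log_div (mul_pos hAC hBC).ne' hC.ne', log_mul hAC.ne' hBC.ne']
    ring
  rw [condMutInfo, entRV_eq_neg_sum, entRV_eq_neg_sum, entRV_eq_neg_sum, entRV_eq_neg_sum,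
    hq, hr, sum_congr rfl fun ω _ => hpt ω, sum_sub_distrib, sum_add_distrib]
  ring

theorem condMutInfo_nonneg (hp : ∀ ω, 0 ≤ p ω) (A : Ω → β) (B : Ω → γ) (C : Ω → δ) :
    0 ≤ condMutInfo p A B C := by
  rw [condMutInfo_eq_sum_mul_log_sub hp, sub_nonneg]
  refine sum_mul_log_le_sum_mul_log (distOf_nonneg hp _)
    (condIndepDist_nonneg hp A B C) (fun _ => distOf_eq_zero_of_condIndepDist_eq_zero hp A B C) ?_
  rw [sum_condIndepDist, sum_distOf]

theorem distOf_eq_condIndepDist_of_condMutInfo_eq_zero (hp : ∀ ω, 0 ≤ p ω) {A : Ω → β}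
    {B : Ω → γ} {C : Ω → δ} (h : condMutInfo p A B C = 0) :
    distOf p (fun ω => (A ω, B ω, C ω)) = condIndepDist p A B C := by
  rw [condMutInfo_eq_sum_mul_log_sub hp, sub_eq_zero] at h
  exact eq_of_sum_mul_log_eq (distOf_nonneg hp _) (condIndepDist_nonneg hp A B C)
    (fun _ => distOf_eq_zero_of_condIndepDist_eq_zero hp A B C)
    (by rw [sum_condIndepDist, sum_distOf]) h.symm

end ConditionalMutualInformation

section Entropy

variable {Ω β γ : Type*} [Fintype Ω] [Fintype β] [Fintype γ] [DecidableEq β] [DecidableEq γ]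
  {p : Ω → ℝ}

theorem mutInfo_nonneg (hp : IsPMF p) (A : Ω → β) (B : Ω → γ) : 0 ≤ mutInfo p A B := by
  have hcmi := condMutInfo_nonneg hp.1 A B fun _ => ()
  have hA : entRV p (fun ω => (A ω, ())) = entRV p A :=
    entRV_comp_of_injective p A (G := fun a => (a, ())) fun _ _ h => congrArg Prod.fst h
  have hB : entRV p (fun ω => (B ω, ())) = entRV p B :=
    entRV_comp_of_injective p B (G := fun b => (b, ())) fun _ _ h => congrArg Prod.fst h
  have hAB : entRV p (fun ω => (A ω, B ω, ())) = entRV p (fun ω => (A ω, B ω)) :=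
    entRV_comp_of_injective p (fun ω => (A ω, B ω)) (G := fun t => (t.1, t.2, ()))
      fun _ _ h => by simpa [Prod.ext_iff] using h
  have hunit : entRV p (fun _ => ()) = 0 := by
    rw [entRV_of_distOf_eq_const (c := 1) (fun _ => by simpa [distOf] using hp.2) (by simp),
      log_one, neg_zero]
  rw [condMutInfo, hA, hB, hAB, hunit] at hcmi
  rw [mutInfo]
  linarith

theorem entRV_pair_of_distOf_eq_const (hp : IsPMF p) {A : Ω → β} {B : Ω → γ} {c : ℝ}
    (h : ∀ a b, distOf p (fun ω => (A ω, B ω)) (a, b) = c) :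
    entRV p (fun ω => (A ω, B ω)) = entRV p A + entRV p B := by
  have hA (a : β) : distOf p A a = Fintype.card γ * c := by
    simp [← sum_distOf_pair_right p A B a, h]
  have hB (b : γ) : distOf p B b = Fintype.card β * c := by
    simp [← sum_distOf_pair_left p A B b, h]
  have hc : Fintype.card β * (Fintype.card γ * c) = 1 := by
    have := sum_distOf p fun ω => (A ω, B ω)
    simp only [h, sum_const, card_univ, Fintype.card_prod, nsmul_eq_mul, hp.2] at this
    push_cast at this
    linear_combination this
  have hcA : (Fintype.card γ * c : ℝ) ≠ 0 := right_ne_zero_of_mul_eq_one hc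
  have hcB : (Fintype.card β * c : ℝ) ≠ 0 :=
    left_ne_zero_of_mul_eq_one (b := (Fintype.card γ : ℝ)) (by linear_combination hc)
  have hlog : log c = log (Fintype.card β * c) + log (Fintype.card γ * c) := by
    rw [← log_mul hcB hcA]; congr 1; linear_combination -c * hc
  rw [entRV_of_distOf_eq_const (fun t => h t.1 t.2) (by simpa [mul_assoc] using hc),
    entRV_of_distOf_eq_const hA hc, entRV_of_distOf_eq_const hB (by linear_combination hc), hlog]
  ring

end Entropy

section Example2

variable {Ω 𝓜 : Type*} {n : ℕ} {Xv : Ω → Fin n → Bool} {Yv : Ω → Fin n → Bool × Bool}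

def negFst (y : Fin n → Bool × Bool) : Fin n → Bool × Bool := fun i => (!(y i).1, (y i).2)

lemma negFst_involutive : Function.Involutive (negFst (n := n)) :=
  fun y => funext fun i => by simp [negFst]

lemma selSame_beq_selSame_negFst (ω : Ω) (i : Fin n) :
    (selSame Xv Yv ω i == selSame Xv (fun ω => negFst (Yv ω)) ω i) = Xv ω i := by
  unfold selSame negFst
  cases Xv ω i <;> simp

variable [Fintype Ω] {p : Ω → ℝ}

lemma distOf_pair_of_unifIID (hiid : UnifIID p Xv Yv) (y : Fin n → Bool × Bool)
    (x : Fin n → Bool) : distOf p (fun ω => (Yv ω, Xv ω)) (y, x) = (1 / 8 : ℝ) ^ n := by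
  rw [← hiid x y]
  simp only [distOf, probOf, Prod.ext_iff, and_comm]
  -- `probOf` decides events classically, so only the `Decidable` instances differ
  congr 1
  ext ω
  congr

variable [Fintype 𝓜] [DecidableEq 𝓜] {M : Ω → 𝓜}

lemma distOf_negFst_eq (hp : ∀ ω, 0 ≤ p ω) (hiid : UnifIID p Xv Yv)
    (hci : condMutInfo p M Yv Xv = 0) :
    distOf p (fun ω => (M ω, negFst (Yv ω), Xv ω)) = distOf p (fun ω => (M ω, Yv ω, Xv ω)) := by
  funext t
  have hflip := distOf_comp_of_involutive p (fun ω => (M ω, Yv ω, Xv ω))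
    (e := fun t => (t.1, negFst t.2.1, t.2.2)) (fun t => by simp [negFst_involutive t.2.1]) t
  rw [hflip, distOf_eq_condIndepDist_of_condMutInfo_eq_zero hp hci]
  simp only [condIndepDist, distOf_pair_of_unifIID hiid]

lemma entRV_le_entRV_selSame_selSame_negFst (hp : ∀ ω, 0 ≤ p ω) :
    entRV p (fun ω => (M ω, Yv ω, Xv ω)) ≤ entRV p (fun ω =>
      (selSame Xv Yv ω, selSame Xv (fun ω => negFst (Yv ω)) ω, (M ω, Yv ω))) := by
  refine le_of_eq_of_le ?_ (entRV_comp_le hp _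
    (G := fun t => (t.2.2.1, t.2.2.2, fun i => t.1 i == t.2.1 i)))
  simp only [selSame_beq_selSame_negFst]

lemma entRV_selSame_negFst_eq (hp : ∀ ω, 0 ≤ p ω) (hiid : UnifIID p Xv Yv)
    (hci : condMutInfo p M Yv Xv = 0) :
    entRV p (fun ω => (selSame Xv (fun ω => negFst (Yv ω)) ω, (M ω, Yv ω))) =
      entRV p (fun ω => (selSame Xv Yv ω, (M ω, Yv ω))) :=
  calc entRV p (fun ω => (selSame Xv (fun ω => negFst (Yv ω)) ω, (M ω, Yv ω)))
      = entRV p (fun ω => (selSame Xv (fun ω => negFst (Yv ω)) ω, (M ω, negFst (Yv ω)))) :=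
        (entRV_comp_of_injective p
          (fun ω => (selSame Xv (fun ω => negFst (Yv ω)) ω, (M ω, Yv ω)))
          (G := fun t => (t.1, t.2.1, negFst t.2.2))
          fun s t h => by simpa [Prod.ext_iff, negFst_involutive.injective.eq_iff] using h).symm
    _ = entRV p (fun ω => (selSame Xv Yv ω, (M ω, Yv ω))) :=
        -- `(m, y, x) ↦ (y_x, (m, y))`, applied to `(M, Ỹⁿ, Xⁿ)` and to `(M, Yⁿ, Xⁿ)`
        entRV_comp_congr (distOf_negFst_eq hp hiid hci)
          fun t => (fun i => if t.2.2 i then (t.2.1 i).2 else (t.2.1 i).1, t.1, t.2.1)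

end Example2

/-- **Alice-side entropy bound from Example 2.** If `M₁` is conditionally independent of
`Yⁿ` given `Xⁿ`, then `H(Xⁿ | M₁) ≤ 2 · H(Y_Xⁿ | M₁, Yⁿ)`. -/
theorem alice_side_entropy_bound {Ω 𝓜₁ : Type}
    [Fintype Ω] [Fintype 𝓜₁] [DecidableEq 𝓜₁]
    (n : ℕ) (p : Ω → ℝ) (hp : IsPMF p)
    (Xv : Ω → Fin n → Bool) (Yv : Ω → Fin n → Bool × Bool)
    (hiid : UnifIID p Xv Yv)
    (M₁ : Ω → 𝓜₁)
    (hci : condMutInfo p M₁ Yv Xv = 0) :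
    condEnt p Xv M₁ ≤ 2 * condEnt p (selSame Xv Yv) (fun ω => (M₁ ω, Yv ω)) := by
  have hswap : entRV p (fun ω => (Xv ω, M₁ ω)) = entRV p (fun ω => (M₁ ω, Xv ω)) :=
    entRV_comp_of_injective p (fun ω => (M₁ ω, Xv ω)) (G := Prod.swap) Prod.swap_injective
  have hYX := entRV_pair_of_distOf_eq_const (A := Yv) (B := Xv) hp (distOf_pair_of_unifIID hiid)
  have hMY := mutInfo_nonneg hp M₁ Yv
  have hrecover := entRV_le_entRV_selSame_selSame_negFst (Xv := Xv) (Yv := Yv) (M := M₁) hp.1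
  have hsub := condMutInfo_nonneg hp.1 (selSame Xv Yv) (selSame Xv fun ω => negFst (Yv ω))
    fun ω => (M₁ ω, Yv ω)
  have hsymm := entRV_selSame_negFst_eq hp.1 hiid hci
  rw [condMutInfo] at hci hsub
  rw [mutInfo] at hMY
  rw [condEnt, condEnt]
  linarith
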